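/- In G̅_q, no two vertices of degree q are adjacent; consequently every edge joins either a degree-q vertex to a degree-(q+1) vertex or two degree-(q+1) vertices. -/

import Mathlib

open Projectivization

/-- Orthogonality of projective points: scalar product of representatives is zero. -/
def ortho {F : Type} [Field F] (P L : Projectivization F (Fin 3 → F)) : Prop :=
  dotProduct P.rep L.rep = 0

instance {F : Type} [Field F] [Finite F] :
    Finite (Projectivization F (Fin 3 → F)) := Quotient.finite _

noncomputable instance {F : Type} [Field F] [Fintype F] :
    Fintype (Projectivization F (Fin 3 → F)) := Fintype.ofFinite _

/-- The incidence graph `G_q` of the projective plane over `F`. -/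
def projGraph (F : Type) [Field F] :
    SimpleGraph (Bool × Projectivization F (Fin 3 → F)) where
  Adj v w := v.1 ≠ w.1 ∧ ortho v.2 w.2
  symm := by
    constructor
    rintro ⟨s, P⟩ ⟨t, L⟩ ⟨h1, h2⟩
    exact ⟨h1.symm, by rwa [ortho, dotProduct_comm]⟩
  loopless := by constructor; rintro ⟨s, P⟩ ⟨h, _⟩; exact h rfl

/-- The modified incidence (polarity) graph `G̅_q` of the projective plane over `F`. -/
def polarityGraph (F : Type) [Field F] :
    SimpleGraph (Projectivization F (Fin 3 → F)) where
  Adj P L := P ≠ L ∧ ortho P L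
  symm := by
    constructor
    rintro P L ⟨h1, h2⟩
    exact ⟨h1.symm, by rwa [ortho, dotProduct_comm]⟩
  loopless := by constructor; rintro P ⟨h, _⟩; exact h rfl

/-!
The degree of a point `P` of `G̅_q` is the number of lines of `PG(2, q)` through `P`, namely
`q + 1` (the plane has `q² + q + 1` points, hence order `q`), minus one when `P ⊥ P`, since the
loop at `P` is not an edge. Two adjacent self-orthogonal points `P ≠ L` would lie on both of the
distinct lines `P^⊥` and `L^⊥`, which is impossible in a projective plane.
-/

open Configuration
open scoped LinearAlgebra.Projectivization

section PolarityGraph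

variable {F : Type} [Field F]

theorem ortho_iff_orthogonal (P L : ℙ F (Fin 3 → F)) : ortho P L ↔ P.orthogonal L := by
  rw [ortho, ← orthogonal_mk P.rep_nonzero L.rep_nonzero, mk_rep, mk_rep]

theorem polarityGraph_neighborSet (P : ℙ F (Fin 3 → F)) :
    (polarityGraph F).neighborSet P = {L | P.orthogonal L} \ {P} := by
  ext L
  simp [polarityGraph, ortho_iff_orthogonal, and_comm, eq_comm]

theorem not_both_orthogonal_self_of_adj {P L : ℙ F (Fin 3 → F)}
    (h : (polarityGraph F).Adj P L) : ¬ (P.orthogonal P ∧ L.orthogonal L) := by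
  rintro ⟨hP, hL⟩
  have hPL := (ortho_iff_orthogonal P L).1 h.2
  exact h.1 ((ofField.eq_or_eq_of_orthogonal hP (orthogonal_comm.1 hPL) hPL hL).elim id id)

variable [Fintype F]

theorem card_projectivization_fin_three :
    Nat.card (ℙ F (Fin 3 → F)) = Fintype.card F ^ 2 + Fintype.card F + 1 := by
  rw [card_of_finrank F _ (Module.finrank_fin_fun F), Nat.card_eq_fintype_card]
  simp only [Finset.sum_range_succ, Finset.sum_range_zero]
  ring

theorem order_projectivization_fin_three [DecidableEq F] :
    ProjectivePlane.order (ℙ F (Fin 3 → F)) (ℙ F (Fin 3 → F)) = Fintype.card F := by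
  have h := ProjectivePlane.card_points (ℙ F (Fin 3 → F)) (ℙ F (Fin 3 → F))
  rw [← Nat.card_eq_fintype_card, card_projectivization_fin_three] at h
  set n := ProjectivePlane.order (ℙ F (Fin 3 → F)) (ℙ F (Fin 3 → F))
  rcases lt_trichotomy n (Fintype.card F) with hlt | heq | hgt
  · nlinarith
  · exact heq
  · nlinarith

theorem card_orthogonal (P : ℙ F (Fin 3 → F)) :
    Nat.card {L // P.orthogonal L} = Fintype.card F + 1 := by
  classical
  rw [← order_projectivization_fin_three]
  exact ProjectivePlane.lineCount_eq (ℙ F (Fin 3 → F)) P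

theorem card_neighborSet_polarityGraph_of_orthogonal_self {P : ℙ F (Fin 3 → F)}
    (h : P.orthogonal P) : Nat.card ((polarityGraph F).neighborSet P) = Fintype.card F := by
  have hP : P ∈ {L | P.orthogonal L} := h
  rw [polarityGraph_neighborSet, Nat.card_coe_set_eq, Set.ncard_sdiff_singleton_of_mem hP,
    ← Nat.card_coe_set_eq]
  simp only [Set.coe_ofPred, card_orthogonal, add_tsub_cancel_right]

theorem card_neighborSet_polarityGraph_of_not_orthogonal_self {P : ℙ F (Fin 3 → F)}
    (h : ¬ P.orthogonal P) :
    Nat.card ((polarityGraph F).neighborSet P) = Fintype.card F + 1 := by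
  have hP : P ∉ {L | P.orthogonal L} := h
  rw [polarityGraph_neighborSet, Set.sdiff_singleton_eq_self hP]
  exact card_orthogonal P

theorem card_neighborSet_polarityGraph_eq_card_iff (P : ℙ F (Fin 3 → F)) :
    Nat.card ((polarityGraph F).neighborSet P) = Fintype.card F ↔ P.orthogonal P := by
  refine ⟨fun hcard => ?_, card_neighborSet_polarityGraph_of_orthogonal_self⟩
  by_contra h
  have := card_neighborSet_polarityGraph_of_not_orthogonal_self h
  omega

end PolarityGraph

theorem polarityGraph_no_low_low_edges_general (q : ℕ)
    (F : Type) [Field F] [Fintype F] (hF : Fintype.card F = q) :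
    (∀ P L : Projectivization F (Fin 3 → F), (polarityGraph F).Adj P L →
      ¬(Nat.card ((polarityGraph F).neighborSet P) = q ∧
        Nat.card ((polarityGraph F).neighborSet L) = q)) ∧
    (∀ P L : Projectivization F (Fin 3 → F), (polarityGraph F).Adj P L →
      (Nat.card ((polarityGraph F).neighborSet P) = q ∧
         Nat.card ((polarityGraph F).neighborSet L) = q + 1) ∨
      (Nat.card ((polarityGraph F).neighborSet P) = q + 1 ∧
         Nat.card ((polarityGraph F).neighborSet L) = q) ∨
      (Nat.card ((polarityGraph F).neighborSet P) = q + 1 ∧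
         Nat.card ((polarityGraph F).neighborSet L) = q + 1)) := by
  subst hF
  refine ⟨fun P L hPL ⟨hP, hL⟩ => ?_, fun P L hPL => ?_⟩
  · exact not_both_orthogonal_self_of_adj hPL
      ⟨(card_neighborSet_polarityGraph_eq_card_iff P).1 hP,
        (card_neighborSet_polarityGraph_eq_card_iff L).1 hL⟩
  · by_cases hP : P.orthogonal P <;> by_cases hL : L.orthogonal L
    · exact absurd ⟨hP, hL⟩ (not_both_orthogonal_self_of_adj hPL)
    · exact Or.inl ⟨card_neighborSet_polarityGraph_of_orthogonal_self hP,
        card_neighborSet_polarityGraph_of_not_orthogonal_self hL⟩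
    · exact Or.inr (Or.inl ⟨card_neighborSet_polarityGraph_of_not_orthogonal_self hP,
        card_neighborSet_polarityGraph_of_orthogonal_self hL⟩)
    · exact Or.inr (Or.inr ⟨card_neighborSet_polarityGraph_of_not_orthogonal_self hP,
        card_neighborSet_polarityGraph_of_not_orthogonal_self hL⟩)

/-- In `G̅_q`, no two vertices of degree `q` are adjacent; consequently every edge joins a
degree-`q` vertex to a degree-`(q+1)` vertex or two degree-`(q+1)` vertices. -/
theorem polarityGraph_no_low_low_edges (q : ℕ) (hq : IsPrimePow q)
    (F : Type) [Field F] [Fintype F] (hF : Fintype.card F = q) :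
    (∀ P L : Projectivization F (Fin 3 → F), (polarityGraph F).Adj P L →
      ¬(Nat.card ((polarityGraph F).neighborSet P) = q ∧
        Nat.card ((polarityGraph F).neighborSet L) = q)) ∧
    (∀ P L : Projectivization F (Fin 3 → F), (polarityGraph F).Adj P L →
      (Nat.card ((polarityGraph F).neighborSet P) = q ∧
         Nat.card ((polarityGraph F).neighborSet L) = q + 1) ∨
      (Nat.card ((polarityGraph F).neighborSet P) = q + 1 ∧
         Nat.card ((polarityGraph F).neighborSet L) = q) ∨
      (Nat.card ((polarityGraph F).neighborSet P) = q + 1 ∧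
         Nat.card ((polarityGraph F).neighborSet L) = q + 1)) :=
  polarityGraph_no_low_low_edges_general q F hF
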